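/- Let ν₀ and ν₁ be probability measures on a measurable space 𝒳 and let h, h₀*, h₁* : 𝒳 → ℝ be measurable functions taking values in {0,1}. For a ∈ {0,1} and functions f, f' define ε_a(f, f') = ∫ |f(x) − f'(x)| dν_a(x). Then |ε₀(h, h₀*) − ε₁(h, h₁*)| ≤ min{ ε₀(h₀*, h₁*), ε₁(h₀*, h₁*) } + dTV(ν₀, ν₁). -/

import Mathlib

open MeasureTheory

/-!
For `{0,1}`-valued functions the disagreement `∫ |f - g| dν` is the probability of `{f ≠ g}`,
and these probabilities satisfy the triangle inequality. Comparing through `h₁` bounds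
`ε₀(h, h₀) - ε₁(h, h₁)` by `ε₀(h₀, h₁) + (ν₀ - ν₁){h ≠ h₁}`, comparing through `h₀` bounds it
by `ε₁(h₀, h₁) + (ν₀ - ν₁){h ≠ h₀}`, and each difference of probabilities is at most
`dTV ν₀ ν₁`; the other sign is symmetric.
-/

/-- Total variation distance between two measures:
the supremum over measurable sets of the absolute difference of the probabilities. -/
noncomputable def dTV {𝒳 : Type*} [MeasurableSpace 𝒳] (P Q : Measure 𝒳) : ℝ :=
  ⨆ E : {E : Set 𝒳 // MeasurableSet E}, |(P E.1).toReal - (Q E.1).toReal|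

lemma abs_sub_eq_indicator_ne {𝒳 : Type*} {f g : 𝒳 → ℝ} (hf : ∀ x, f x = 0 ∨ f x = 1)
    (hg : ∀ x, g x = 0 ∨ g x = 1) (x : 𝒳) :
    |f x - g x| = {y | f y ≠ g y}.indicator 1 x := by
  rcases hf x with h1 | h1 <;> rcases hg x with h2 | h2 <;> simp [Set.indicator, h1, h2]

section

variable {𝒳 : Type*} [MeasurableSpace 𝒳]

lemma measureReal_setOf_ne_le_add {β : Type*} (ν : Measure 𝒳) [IsFiniteMeasure ν]
    (f g k : 𝒳 → β) :
    ν.real {x | f x ≠ g x} ≤ ν.real {x | f x ≠ k x} + ν.real {x | k x ≠ g x} := by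
  have hsub : {x | f x ≠ g x} ⊆ {x | f x ≠ k x} ∪ {x | k x ≠ g x} := by
    intro x hfg
    by_contra! hx
    simp_all
  exact (measureReal_mono hsub).trans (measureReal_union_le _ _)

lemma integral_abs_sub_eq_measureReal_ne {f g : 𝒳 → ℝ} (hf : Measurable f)
    (hg : Measurable g) (hf01 : ∀ x, f x = 0 ∨ f x = 1) (hg01 : ∀ x, g x = 0 ∨ g x = 1)
    (ν : Measure 𝒳) :
    ∫ x, |f x - g x| ∂ν = ν.real {x | f x ≠ g x} := by
  simp_rw [abs_sub_eq_indicator_ne hf01 hg01]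
  exact integral_indicator_one (measurableSet_eq_fun hf hg).compl

lemma abs_measureReal_sub_le_dTV (ν₀ ν₁ : Measure 𝒳) [IsFiniteMeasure ν₀]
    [IsFiniteMeasure ν₁] {E : Set 𝒳} (hE : MeasurableSet E) :
    |ν₀.real E - ν₁.real E| ≤ dTV ν₀ ν₁ := by
  have hbdd : BddAbove (Set.range fun F : {F : Set 𝒳 // MeasurableSet F} =>
      |(ν₀ F.1).toReal - (ν₁ F.1).toReal|) := by
    refine ⟨ν₀.real .univ + ν₁.real .univ, ?_⟩
    rintro r ⟨F, rfl⟩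
    have h₀ : ν₀.real F.1 ≤ ν₀.real .univ := measureReal_mono (Set.subset_univ _)
    have h₁ : ν₁.real F.1 ≤ ν₁.real .univ := measureReal_mono (Set.subset_univ _)
    show |ν₀.real F.1 - ν₁.real F.1| ≤ _
    rw [abs_sub_le_iff]
    constructor <;> linarith [measureReal_nonneg (μ := ν₀) (s := F.1),
      measureReal_nonneg (μ := ν₁) (s := F.1)]
  exact le_ciSup hbdd ⟨E, hE⟩

end

/-- The difference between the expected disagreements `ε₀(h, h₀*)` and `ε₁(h, h₁*)`
is bounded by the minimal disagreement between the reference functions plus the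
total variation distance between the two input distributions. -/
theorem disagreement_difference_bound
    {𝒳 : Type*} [MeasurableSpace 𝒳]
    (ν₀ ν₁ : Measure 𝒳) [IsProbabilityMeasure ν₀] [IsProbabilityMeasure ν₁]
    (h h₀ h₁ : 𝒳 → ℝ) (hh : Measurable h) (hh₀ : Measurable h₀) (hh₁ : Measurable h₁)
    (hh01 : ∀ x, h x = 0 ∨ h x = 1) (hh₀01 : ∀ x, h₀ x = 0 ∨ h₀ x = 1)
    (hh₁01 : ∀ x, h₁ x = 0 ∨ h₁ x = 1) :
    |(∫ x, |h x - h₀ x| ∂ν₀) - ∫ x, |h x - h₁ x| ∂ν₁| ≤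
      min (∫ x, |h₀ x - h₁ x| ∂ν₀) (∫ x, |h₀ x - h₁ x| ∂ν₁) + dTV ν₀ ν₁ := by
  rw [integral_abs_sub_eq_measureReal_ne hh hh₀ hh01 hh₀01,
    integral_abs_sub_eq_measureReal_ne hh hh₁ hh01 hh₁01,
    integral_abs_sub_eq_measureReal_ne hh₀ hh₁ hh₀01 hh₁01,
    integral_abs_sub_eq_measureReal_ne hh₀ hh₁ hh₀01 hh₁01]
  obtain ⟨hd₀, hd₀'⟩ := abs_sub_le_iff.1 <|
    abs_measureReal_sub_le_dTV ν₀ ν₁ (E := {x | h x ≠ h₀ x}) (measurableSet_eq_fun hh hh₀).compl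
  obtain ⟨hd₁, hd₁'⟩ := abs_sub_le_iff.1 <|
    abs_measureReal_sub_le_dTV ν₀ ν₁ (E := {x | h x ≠ h₁ x}) (measurableSet_eq_fun hh hh₁).compl
  have hsymm : {x | h₁ x ≠ h₀ x} = {x | h₀ x ≠ h₁ x} := by simp_rw [ne_comm]
  have t₀ := measureReal_setOf_ne_le_add ν₀ h h₀ h₁
  have t₀' := measureReal_setOf_ne_le_add ν₀ h h₁ h₀
  have t₁ := measureReal_setOf_ne_le_add ν₁ h h₀ h₁
  have t₁' := measureReal_setOf_ne_le_add ν₁ h h₁ h₀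
  rw [hsymm] at t₀ t₁
  rw [← min_add_add_right, abs_sub_le_iff, le_min_iff, le_min_iff]
  refine ⟨⟨?_, ?_⟩, ?_, ?_⟩ <;> linarith
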